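/- Let n ≥ 3. For ξ ∈ ℝⁿ, define the linear map 𝕃(ξ): ℝⁿ → Symₙ(ℝ) by 𝕃(ξ)a = a⊙ξ − Iₙ (a·ξ)/n (the principal symbol of the deviatoric operator). Then for any three pairwise linearly independent vectors ξ, η, ω ∈ ℝⁿ, the intersection of the images im 𝕃(ξ) ∩ im 𝕃(η) ∩ im 𝕃(ω) = {0}. -/

import Mathlib

open Matrix

/-!
If `𝕃(ξ)a = 𝕃(η)b` with `ξ, η` independent, evaluating the quadratic form of both sides on a
nonzero vector orthogonal to `ξ` and `η` (which exists since `n ≥ 3`) shows that the trace parts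
agree, so `a ⊙ ξ = b ⊙ η`. Applying this to a vector `u` with `ξ·u = 1`, `η·u = 0` (and to its
analogue with `ξ, η` swapped) gives `a = β η` and `b = β ξ` for one `β`. For a matrix in all
three images, `b = β ξ = ν ω` with `ξ, ω` independent, so `β = 0`, `a = 0` and the matrix vanishes.
-/

/-- The principal symbol of the deviatoric operator:
`𝕃(ξ)a = a⊙ξ − Iₙ (a·ξ)/n`, where `a⊙ξ = ½(a⊗ξ + ξ⊗a)`. -/
noncomputable def devSymbol (n : ℕ) (ξ : Fin n → ℝ) (a : Fin n → ℝ) :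
    Matrix (Fin n) (Fin n) ℝ :=
  (2 : ℝ)⁻¹ • (Matrix.vecMulVec a ξ + Matrix.vecMulVec ξ a) -
    (dotProduct a ξ / (n : ℝ)) • (1 : Matrix (Fin n) (Fin n) ℝ)

section Field

variable {K ι : Type*} [Field K] [Fintype ι]

theorem mulVec_of_pair (ξ η v : ι → K) :
    Matrix.of ![ξ, η] *ᵥ v = ![ξ ⬝ᵥ v, η ⬝ᵥ v] := by
  ext i; fin_cases i <;> rfl

theorem exists_dotProduct_eq_one_and_eq_zero {ξ η : ι → K} (h : LinearIndependent K ![ξ, η]) :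
    ∃ u : ι → K, ξ ⬝ᵥ u = 1 ∧ η ⬝ᵥ u = 0 := by
  have hrank : (Matrix.of ![ξ, η]).rank = 2 := by
    simpa using LinearIndependent.rank_matrix (M := Matrix.of ![ξ, η]) h
  have hsurj : LinearMap.range (Matrix.of ![ξ, η]).mulVecLin = ⊤ :=
    Submodule.eq_top_of_finrank_eq (by simpa [Matrix.rank] using hrank)
  obtain ⟨u, hu⟩ := LinearMap.range_eq_top.mp hsurj ![1, 0]
  rw [mulVecLin_apply, mulVec_of_pair] at hu
  exact ⟨u, congrFun hu 0, congrFun hu 1⟩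

theorem exists_ne_zero_dotProduct_eq_zero_of_two_lt_card (hι : 2 < Fintype.card ι)
    (ξ η : ι → K) :
    ∃ v : ι → K, v ≠ 0 ∧ ξ ⬝ᵥ v = 0 ∧ η ⬝ᵥ v = 0 := by
  have hker : LinearMap.ker (Matrix.of ![ξ, η]).mulVecLin ≠ ⊥ :=
    LinearMap.ker_ne_bot_of_finrank_lt (by simpa using hι)
  obtain ⟨v, hv, hv0⟩ := Submodule.exists_mem_ne_zero_of_ne_bot hker
  rw [LinearMap.mem_ker, mulVecLin_apply, mulVec_of_pair] at hv
  exact ⟨v, hv0, congrFun hv 0, congrFun hv 1⟩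

theorem vecMulVec_add_vecMulVec_mulVec (a ξ u : ι → K) :
    (vecMulVec a ξ + vecMulVec ξ a) *ᵥ u = (ξ ⬝ᵥ u) • a + (a ⬝ᵥ u) • ξ := by
  simp [add_mulVec, vecMulVec_mulVec]

theorem eq_dotProduct_smul_of_vecMulVec_add_vecMulVec_eq [NeZero (2 : K)] {a b ξ η u : ι → K}
    (hab : vecMulVec a ξ + vecMulVec ξ a = vecMulVec b η + vecMulVec η b)
    (hξ : ξ ⬝ᵥ u = 1) (hη : η ⬝ᵥ u = 0) : a = (b ⬝ᵥ u) • η := by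
  have hu : a + (a ⬝ᵥ u) • ξ = (b ⬝ᵥ u) • η := by
    simpa [vecMulVec_add_vecMulVec_mulVec, hξ, hη] using congrArg (· *ᵥ u) hab
  have hau : a ⬝ᵥ u = 0 := by
    have := congrArg (· ⬝ᵥ u) hu
    simp only [add_dotProduct, smul_dotProduct, hξ, hη, smul_eq_mul, mul_one, mul_zero] at this
    simpa [← two_mul, two_ne_zero] using this
  simpa [hau] using hu

theorem exists_eq_smul_of_vecMulVec_add_vecMulVec_eq [NeZero (2 : K)] {a b ξ η : ι → K}
    (h : LinearIndependent K ![ξ, η])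
    (hab : vecMulVec a ξ + vecMulVec ξ a = vecMulVec b η + vecMulVec η b) :
    ∃ β : K, a = β • η ∧ b = β • ξ := by
  obtain ⟨u, hξu, hηu⟩ := exists_dotProduct_eq_one_and_eq_zero h
  obtain ⟨w, hηw, hξw⟩ := exists_dotProduct_eq_one_and_eq_zero (K := K) (ξ := η) (η := ξ)
    (LinearIndependent.pair_symm_iff.mp h)
  have ha := eq_dotProduct_smul_of_vecMulVec_add_vecMulVec_eq hab hξu hηu
  have hb := eq_dotProduct_smul_of_vecMulVec_add_vecMulVec_eq hab.symm hηw hξw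
  refine ⟨a ⬝ᵥ w, ?_, hb⟩
  rwa [hb, smul_dotProduct, hξu, smul_eq_mul, mul_one] at ha

end Field

theorem devSymbol_zero (n : ℕ) (ξ : Fin n → ℝ) : devSymbol n ξ 0 = 0 := by
  simp [devSymbol]

theorem dotProduct_devSymbol_mulVec_self (n : ℕ) (ξ a v : Fin n → ℝ) :
    v ⬝ᵥ (devSymbol n ξ a *ᵥ v) = (ξ ⬝ᵥ v) * (a ⬝ᵥ v) - a ⬝ᵥ ξ / n * (v ⬝ᵥ v) := by
  simp only [devSymbol, sub_mulVec, smul_mulVec, vecMulVec_add_vecMulVec_mulVec, one_mulVec,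
    dotProduct_sub, dotProduct_smul, dotProduct_add, smul_eq_mul]
  rw [dotProduct_comm v a, dotProduct_comm v ξ]
  ring

theorem vecMulVec_add_vecMulVec_eq_of_devSymbol_eq {n : ℕ} (hn : 3 ≤ n) {ξ η a b : Fin n → ℝ}
    (h : devSymbol n ξ a = devSymbol n η b) :
    vecMulVec a ξ + vecMulVec ξ a = vecMulVec b η + vecMulVec η b := by
  obtain ⟨v, hv, hξv, hηv⟩ :=
    exists_ne_zero_dotProduct_eq_zero_of_two_lt_card (by rw [Fintype.card_fin]; omega) ξ η
  have htrace : a ⬝ᵥ ξ / n = b ⬝ᵥ η / n := by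
    have := congrArg (fun M => v ⬝ᵥ (M *ᵥ v)) h
    simp only [dotProduct_devSymbol_mulVec_self, hξv, hηv, zero_mul, zero_sub, neg_inj] at this
    exact mul_right_cancel₀ (mt dotProduct_self_eq_zero.mp hv) this
  rw [devSymbol, devSymbol, htrace, sub_left_inj] at h
  exact smul_right_injective _ (inv_ne_zero two_ne_zero) h

theorem exists_eq_smul_of_devSymbol_eq {n : ℕ} (hn : 3 ≤ n) {ξ η a b : Fin n → ℝ}
    (hξη : LinearIndependent ℝ ![ξ, η]) (h : devSymbol n ξ a = devSymbol n η b) :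
    ∃ β : ℝ, a = β • η ∧ b = β • ξ :=
  exists_eq_smul_of_vecMulVec_add_vecMulVec_eq hξη
    (vecMulVec_add_vecMulVec_eq_of_devSymbol_eq hn h)

/-- For `n ≥ 3` and pairwise linearly independent `ξ, η, ω`,
`im 𝕃(ξ) ∩ im 𝕃(η) ∩ im 𝕃(ω) = {0}`. -/
theorem stmt2 (n : ℕ) (hn : 3 ≤ n) (ξ η ω : Fin n → ℝ)
    (h1 : LinearIndependent ℝ ![ξ, η]) (h2 : LinearIndependent ℝ ![η, ω])
    (h3 : LinearIndependent ℝ ![ξ, ω]) :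
    Set.range (devSymbol n ξ) ∩ Set.range (devSymbol n η) ∩ Set.range (devSymbol n ω)
      = {0} := by
  ext M
  simp only [Set.mem_inter_iff, Set.mem_range, Set.mem_singleton_iff]
  constructor
  · rintro ⟨⟨⟨a, rfl⟩, ⟨b, hb⟩⟩, ⟨c, hc⟩⟩
    obtain ⟨β, rfl, rfl⟩ := exists_eq_smul_of_devSymbol_eq hn h1 hb.symm
    obtain ⟨ν, hβν, -⟩ := exists_eq_smul_of_devSymbol_eq hn h2 (hb.trans hc.symm)
    have hβ : β = 0 :=
      (LinearIndependent.pair_iff.mp h3 β (-ν) (by rw [hβν, neg_smul, add_neg_cancel])).1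
    rw [hβ, zero_smul, devSymbol_zero]
  · rintro rfl
    exact ⟨⟨⟨0, devSymbol_zero n ξ⟩, ⟨0, devSymbol_zero n η⟩⟩, ⟨0, devSymbol_zero n ω⟩⟩
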